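/- Under restriction A1 (each Wᵢ is the block-diagonal matrix with an r × r permutation block and a scaled identity block c·I_{p-r}), the matrix M_d defined recursively by M_ℓ = W_ℓ(I_p + W_ℓᵀW_ℓ - M_{ℓ-1})⁻¹W_ℓᵀ equals the diagonal matrix diag((d/(d+1))·I_r, ((Σ_{j=1}^d c^{2j})/(1 + Σ_{j=1}^d c^{2j}))·I_{p-r}), independent of the choice of the permutation blocks. -/

import Mathlib

open Matrix

/-!
Along the recursion both diagonal blocks of `M_ℓ` stay scalar: `W_ℓᵀ W_ℓ = diag(I, c² I)` because
`R_ℓ` is orthogonal, and conjugating a scalar block by `R_ℓ` leaves it unchanged. Writing the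
two scalars as `s / (1 + s)`, one step of the recursion becomes `s ↦ 1 + s` on the first block and
`s ↦ c² (1 + s)` on the second, whence `s = ℓ` and `s = ∑_{j=1}^ℓ c^{2j}`.
-/

/-- The recursively defined matrices `M_ℓ = W_ℓ (I + W_ℓᵀ W_ℓ - M_{ℓ-1})⁻¹ W_ℓᵀ`, `M₀ = 0`. -/
noncomputable def MrecGen {ι : Type*} [Fintype ι] [DecidableEq ι]
    (W : ℕ → Matrix ι ι ℝ) : ℕ → Matrix ι ι ℝ
  | 0 => 0
  | (k + 1) => W (k + 1) * (1 + (W (k + 1))ᵀ * W (k + 1) - MrecGen W k)⁻¹ * (W (k + 1))ᵀ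

namespace Matrix

lemma transpose_permMatrix_mul_self {m R : Type*} [Fintype m] [DecidableEq m]
    [NonAssocSemiring R] (σ : Equiv.Perm m) : (σ.permMatrix R)ᵀ * σ.permMatrix R = 1 := by
  rw [transpose_permMatrix, ← permMatrix_mul, mul_inv_cancel, permMatrix_one]

variable {m n K : Type*} [Fintype m] [Fintype n] [DecidableEq m] [DecidableEq n] [Field K]

lemma inv_fromBlocks_smul_one {a b : K} (ha : a ≠ 0) (hb : b ≠ 0) :
    (fromBlocks (a • 1 : Matrix m m K) 0 0 (b • 1 : Matrix n n K))⁻¹ =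
      fromBlocks (a⁻¹ • 1) 0 0 (b⁻¹ • 1) := by
  refine inv_eq_right_inv ?_
  rw [fromBlocks_multiply, ← fromBlocks_one]
  simp [smul_smul, ha, hb]

lemma fromBlocks_orthogonal_step {P : Matrix m m K} (hP : Pᵀ * P = 1) (a b c : K)
    (ha : 2 - a ≠ 0) (hb : 1 + c ^ 2 - b ≠ 0) :
    fromBlocks P 0 0 (c • 1 : Matrix n n K) *
        (1 + (fromBlocks P 0 0 (c • 1))ᵀ * fromBlocks P 0 0 (c • 1) -
          fromBlocks (a • 1) 0 0 (b • 1))⁻¹ * (fromBlocks P 0 0 (c • 1))ᵀ =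
      fromBlocks ((2 - a)⁻¹ • 1) 0 0 ((c ^ 2 / (1 + c ^ 2 - b)) • 1) := by
  have hP' : P * Pᵀ = 1 := mul_eq_one_comm.mp hP
  have hmid : 1 + (fromBlocks P 0 0 (c • 1 : Matrix n n K))ᵀ * fromBlocks P 0 0 (c • 1) -
      fromBlocks (a • 1) 0 0 (b • 1) = fromBlocks ((2 - a) • 1) 0 0 ((1 + c ^ 2 - b) • 1) := by
    rw [fromBlocks_transpose, fromBlocks_multiply, ← fromBlocks_one, fromBlocks_add,
      sub_eq_add_neg, fromBlocks_neg, fromBlocks_add]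
    simp [hP, smul_smul, sq, add_smul, sub_eq_add_neg, ← one_add_one_eq_two]
  rw [hmid, inv_fromBlocks_smul_one ha hb, fromBlocks_transpose, fromBlocks_multiply,
    fromBlocks_multiply]
  simp [hP', smul_smul, div_eq_inv_mul, sq, mul_comm c, mul_assoc]

end Matrix

lemma Finset.sum_Icc_one_pow_succ {R : Type*} [CommSemiring R] (x : R) (n : ℕ) :
    ∑ j ∈ Icc 1 (n + 1), x ^ j = x * (1 + ∑ j ∈ Icc 1 n, x ^ j) := by
  induction n with
  | zero => simp
  | succ n ih =>
    rw [sum_Icc_succ_top (by omega)]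
    nth_rw 1 [ih]
    rw [sum_Icc_succ_top (by omega)]
    ring

lemma inv_two_sub_div_add_one {x : ℝ} (hx : 0 ≤ x) :
    (2 - x / (x + 1))⁻¹ = (x + 1) / (x + 1 + 1) := by
  have h : 2 - x / (x + 1) = (x + 1 + 1) / (x + 1) := by
    field_simp
    ring
  rw [h, inv_div]

lemma sq_div_one_add_sq_sub_div (c : ℝ) {s : ℝ} (hs : 0 ≤ s) :
    c ^ 2 / (1 + c ^ 2 - s / (1 + s)) = c ^ 2 * (1 + s) / (1 + c ^ 2 * (1 + s)) := by
  have h : 1 + c ^ 2 - s / (1 + s) = (1 + c ^ 2 * (1 + s)) / (1 + s) := by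
    field_simp
    ring
  rw [h, div_div_eq_mul_div]

theorem Mrec_of_restrictionA1_general
    (r q d : ℕ) (c : ℝ)
    (R : ℕ → Equiv.Perm (Fin r))
    (W : ℕ → Matrix (Fin r ⊕ Fin q) (Fin r ⊕ Fin q) ℝ)
    (hW : ∀ i, 1 ≤ i → i ≤ d →
      W i = Matrix.fromBlocks ((R i).permMatrix ℝ) 0 0 (c • (1 : Matrix (Fin q) (Fin q) ℝ))) :
    MrecGen W d =
      Matrix.fromBlocks (((d : ℝ) / ((d : ℝ) + 1)) • 1) 0 0
        (((∑ j ∈ Finset.Icc 1 d, c ^ (2 * j)) / (1 + ∑ j ∈ Finset.Icc 1 d, c ^ (2 * j))) • 1) := by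
  simp_rw [pow_mul]
  induction d with
  | zero => simp [MrecGen]
  | succ k ih =>
    have hS : 0 ≤ ∑ j ∈ Finset.Icc 1 k, (c ^ 2) ^ j := Finset.sum_nonneg fun j _ ↦ by positivity
    rw [Finset.sum_Icc_one_pow_succ]
    generalize ∑ j ∈ Finset.Icc 1 k, (c ^ 2) ^ j = S at hS ih ⊢
    have hk : (k : ℝ) / (k + 1) < 1 := (div_lt_one (by positivity)).mpr (by linarith)
    have hS1 : S / (1 + S) < 1 := (div_lt_one (by positivity)).mpr (by linarith)
    rw [MrecGen, ih (fun i h1 h2 ↦ hW i h1 (by omega)), hW (k + 1) (by omega) le_rfl,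
      fromBlocks_orthogonal_step (transpose_permMatrix_mul_self _) _ _ _ (by linarith)
        (by nlinarith), inv_two_sub_div_add_one k.cast_nonneg,
      sq_div_one_add_sq_sub_div c hS, Nat.cast_succ]

/-- Under restriction A1 (each `Wᵢ = [[Rᵢ, 0], [0, c·I_{p-r}]]` with `Rᵢ` an `r × r`
permutation matrix), the matrix `M_d` equals the diagonal matrix
`diag((d/(d+1))·I_r, ((∑_{j=1}^d c^{2j})/(1 + ∑_{j=1}^d c^{2j}))·I_{p-r})`,
independently of the choice of the permutation blocks. -/
theorem Mrec_of_restrictionA1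
    (r q d : ℕ) (c : ℝ) (hc0 : 0 < c) (hc1 : c < 1)
    (R : ℕ → Equiv.Perm (Fin r))
    (W : ℕ → Matrix (Fin r ⊕ Fin q) (Fin r ⊕ Fin q) ℝ)
    (hW : ∀ i, 1 ≤ i → i ≤ d →
      W i = Matrix.fromBlocks ((R i).permMatrix ℝ) 0 0 (c • (1 : Matrix (Fin q) (Fin q) ℝ))) :
    MrecGen W d =
      Matrix.fromBlocks (((d : ℝ) / ((d : ℝ) + 1)) • 1) 0 0
        (((∑ j ∈ Finset.Icc 1 d, c ^ (2 * j)) / (1 + ∑ j ∈ Finset.Icc 1 d, c ^ (2 * j))) • 1) :=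
  Mrec_of_restrictionA1_general r q d c R W hW
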